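/- arXiv:1606.02670 — 2 statements merged into one kernel-verified Lean document; each statement's English description precedes it below -/
import Mathlib

section
/- Let A be a commutative ring graded by ℕ, let C be a graded subring of A, and let d be a natural number. Suppose A is generated as a C-module by a set of homogeneous elements each of degree at most d. Let ζ ∈ A be an element such that ζ·c = 0 for every homogeneous element c of C of positive degree. Then ζ·β = 0 for every homogeneous element β of A of degree strictly greater than d. (This is the cup-product computation at the heart of the paper's key lemma: if H*(X₁) is a module over the subring φ₁*(H*(Y₁)) generated by homogeneous elements of degree ≤ 2f, and the fiber class [Z] annihilates all positive-degree elements pulled back from the base, then [Z] annihilates every cohomology class of degree exceeding 2f.) -/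
/-! Write a homogeneous `β` of degree `i > d` as `∑ cⱼ sⱼ` with `cⱼ ∈ C` and `sⱼ` homogeneous of
degree `kⱼ ≤ d`. Taking degree-`i` parts, `β = ∑ (cⱼ)_{i - kⱼ} sⱼ`, and each `(cⱼ)_{i - kⱼ}` is a
homogeneous element of `C` of positive degree, hence killed by `ζ`. -/

open DirectSum

theorem DirectSum.coe_decompose_sum_apply {ι M σ ι' : Type*} [DecidableEq ι] [AddCommMonoid M]
    [SetLike σ M] [AddSubmonoidClass σ M] (ℳ : ι → σ) [Decomposition ℳ]
    (s : Finset ι') (f : ι' → M) (i : ι) :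
    (decompose ℳ (∑ j ∈ s, f j) i : M) = ∑ j ∈ s, (decompose ℳ (f j) i : M) := by
  rw [decompose_sum, DFinsupp.finsetSum_apply, AddSubmonoidClass.coe_finsetSum]

theorem DirectSum.mul_coe_decompose_mul_eq_zero_of_lt {ι A σ : Type*} [Semiring A]
    [DecidableEq ι] [AddCommMonoid ι] [PartialOrder ι] [CanonicallyOrderedAdd ι] [Sub ι]
    [OrderedSub ι] [AddLeftReflectLE ι] [SetLike σ A] [AddSubmonoidClass σ A] (𝒜 : ι → σ)
    [GradedRing 𝒜] {ζ c s : A} {k i : ι} (hs : s ∈ 𝒜 k) (hki : k < i)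
    (hζ : ∀ j, 0 < j → ζ * decompose 𝒜 c j = 0) :
    ζ * decompose 𝒜 (c * s) i = 0 := by
  rw [coe_decompose_mul_of_right_mem_of_le 𝒜 hs hki.le, ← mul_assoc,
    hζ _ (tsub_pos_of_lt hki), zero_mul]

/-- If a commutative `ℕ`-graded ring `A` is generated, as a module over a graded
subring `C`, by homogeneous elements of degree at most `d`, and `ζ ∈ A`
annihilates every positive-degree homogeneous element of `C`, then `ζ`
annihilates every homogeneous element of `A` of degree `> d`. -/
theorem annihilates_high_degree_of_annihilates_base
    {A : Type*} [CommRing A] (𝒜 : ℕ → AddSubgroup A) [GradedRing 𝒜]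
    (C : Subring A)
    (hCgr : ∀ c ∈ C, ∀ i : ℕ, (DirectSum.decompose 𝒜 c i : A) ∈ C)
    (d : ℕ) (S : Set A)
    (hShom : ∀ s ∈ S, ∃ i ≤ d, s ∈ 𝒜 i)
    (hgen : ∀ a : A, ∃ (n : ℕ) (c : Fin n → A) (s : Fin n → A),
      (∀ j, c j ∈ C) ∧ (∀ j, s j ∈ S) ∧ a = ∑ j, c j * s j)
    (ζ : A)
    (hζ : ∀ c ∈ C, ∀ i : ℕ, 0 < i → c ∈ 𝒜 i → ζ * c = 0) :
    ∀ β : A, ∀ i : ℕ, d < i → β ∈ 𝒜 i → ζ * β = 0 := by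
  intro β i hdi hβ
  obtain ⟨n, c, s, hc, hs, rfl⟩ := hgen β
  rw [← decompose_of_mem_same 𝒜 hβ, coe_decompose_sum_apply, Finset.mul_sum]
  refine Finset.sum_eq_zero fun j _ => ?_
  obtain ⟨k, hkd, hk⟩ := hShom (s j) (hs j)
  exact mul_coe_decompose_mul_eq_zero_of_lt 𝒜 hk (hkd.trans_lt hdi)
    fun m hm => hζ _ (hCgr _ (hc j) m) m hm (SetLike.coe_mem _)
end

section
/- Let A be a commutative ring graded by ℕ with A_i = 0 for all i > N (top degree N), and suppose the pairing into the top degree is nondegenerate in the following sense: for every m ≤ N and every nonzero homogeneous a ∈ A_m there exists a homogeneous b ∈ A_{N-m} with a·b ≠ 0. Let C be a graded subring of A, let d < m ≤ N be natural numbers, and suppose A is generated as a C-module by a set of homogeneous elements each of degree at most d. If ζ ∈ A_{N-m} satisfies ζ·c = 0 for every homogeneous element c of C of positive degree, then ζ = 0. (This abstracts the conclusion of the paper's key lemma: by Poincaré duality on the 2n-dimensional projective manifold X₀, the class [Z] ∈ H^{2n-2z}(X₀) of a fiber Z of dimension z > f must vanish, contradicting the effectivity of Z; hence every fiber of φ₀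 has dimension at most f = dim X₁ - dim Y₁.) -/
/-!
Pairing `ζ` with a suitable `b ∈ A_m` lands in the top degree `N`. Writing `b = ∑ cⱼ sⱼ` and using
that `ζ` kills the positive-degree components of each `cⱼ`, the product `ζ b` only has components
in degrees `≤ (N - m) + d < N`; so `ζ b = 0`, and nondegeneracy forces `ζ = 0`.
-/

open DirectSum

section GradedAnnihilator

variable {A : Type*} [CommRing A] (𝒜 : ℕ → AddSubgroup A) [GradedRing 𝒜]

theorem mul_eq_mul_decompose_zero_of_forall_pos {ζ c : A}
    (h : ∀ i, 0 < i → ζ * (decompose 𝒜 c i : A) = 0) :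
    ζ * c = ζ * (decompose 𝒜 c 0 : A) := by
  classical
  conv_lhs => rw [← sum_support_decompose 𝒜 c]
  rw [Finset.mul_sum]
  refine Finset.sum_eq_single 0 (fun i _ hi => h i (Nat.pos_of_ne_zero hi)) fun h0 => ?_
  rw [DFinsupp.notMem_support_iff.mp h0, ZeroMemClass.coe_zero, mul_zero]

variable {𝒜} {C : Subring A} {ζ : A} {e : ℕ}

theorem mul_mul_mem_of_forall_pos_mul_eq_zero
    (hCgr : ∀ c ∈ C, ∀ i : ℕ, (decompose 𝒜 c i : A) ∈ C) (hζmem : ζ ∈ 𝒜 e)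
    (hζ : ∀ c ∈ C, ∀ i : ℕ, 0 < i → c ∈ 𝒜 i → ζ * c = 0)
    {c s : A} {i : ℕ} (hc : c ∈ C) (hs : s ∈ 𝒜 i) :
    ζ * (c * s) ∈ 𝒜 (e + i) := by
  have hc₀ : ζ * c = ζ * (decompose 𝒜 c 0 : A) :=
    mul_eq_mul_decompose_zero_of_forall_pos 𝒜 fun k hk =>
      hζ _ (hCgr c hc k) k hk (SetLike.coe_mem _)
  rw [← mul_assoc, hc₀]
  simpa only [add_zero] using SetLike.mul_mem_graded
    (SetLike.mul_mem_graded hζmem (decompose 𝒜 c 0).prop) hs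

theorem decompose_mul_sum_eq_zero_of_lt
    (hCgr : ∀ c ∈ C, ∀ i : ℕ, (decompose 𝒜 c i : A) ∈ C) (hζmem : ζ ∈ 𝒜 e)
    (hζ : ∀ c ∈ C, ∀ i : ℕ, 0 < i → c ∈ 𝒜 i → ζ * c = 0)
    {d k n : ℕ} (c s : Fin k → A) (hc : ∀ j, c j ∈ C) (hs : ∀ j, ∃ i ≤ d, s j ∈ 𝒜 i) (hn : e + d < n) :
    (decompose 𝒜 (ζ * ∑ j, c j * s j) n : A) = 0 := by
  rw [Finset.mul_sum, decompose_sum, DFinsupp.finsetSum_apply, AddSubgroup.val_finsetSum]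
  refine Finset.sum_eq_zero fun j _ => ?_
  obtain ⟨i, hid, hsi⟩ := hs j
  exact decompose_of_mem_ne 𝒜
    (mul_mul_mem_of_forall_pos_mul_eq_zero hCgr hζmem hζ (hc j) hsi) (by omega)

end GradedAnnihilator

theorem vanishing_of_fiber_class_general
    {A : Type*} [CommRing A] (𝒜 : ℕ → AddSubgroup A) [GradedRing 𝒜]
    (N : ℕ)
    (hPair : ∀ m ≤ N, ∀ a ∈ 𝒜 m, a ≠ 0 → ∃ b ∈ 𝒜 (N - m), a * b ≠ 0)
    (C : Subring A)
    (hCgr : ∀ c ∈ C, ∀ i : ℕ, (DirectSum.decompose 𝒜 c i : A) ∈ C)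
    (d m : ℕ) (hdm : d < m) (hmN : m ≤ N)
    (S : Set A)
    (hShom : ∀ s ∈ S, ∃ i ≤ d, s ∈ 𝒜 i)
    (hgen : ∀ a : A, ∃ (n : ℕ) (c : Fin n → A) (s : Fin n → A),
      (∀ j, c j ∈ C) ∧ (∀ j, s j ∈ S) ∧ a = ∑ j, c j * s j)
    (ζ : A) (hζmem : ζ ∈ 𝒜 (N - m))
    (hζ : ∀ c ∈ C, ∀ i : ℕ, 0 < i → c ∈ 𝒜 i → ζ * c = 0) :
    ζ = 0 := by
  by_contra hne
  obtain ⟨b, hb, hζb⟩ := hPair (N - m) (Nat.sub_le N m) ζ hζmem hne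
  rw [Nat.sub_sub_self hmN] at hb
  have hζb_top : ζ * b ∈ 𝒜 N := by
    simpa only [Nat.sub_add_cancel hmN] using SetLike.mul_mem_graded hζmem hb
  obtain ⟨k, c, s, hc, hs, rfl⟩ := hgen b
  have hvanish := decompose_mul_sum_eq_zero_of_lt hCgr hζmem hζ c s hc
    (fun j => hShom (s j) (hs j)) (show N - m + d < N by omega)
  exact hζb (by rwa [decompose_of_mem_same 𝒜 hζb_top] at hvanish)

/-- Poincaré-duality vanishing: in a commutative `ℕ`-graded ring `A` with top
degree `N` and nondegenerate pairing into the top degree, if `A` is generated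
as a module over a graded subring `C` by homogeneous elements of degree `≤ d`,
and `ζ ∈ A_{N-m}` (with `d < m ≤ N`) annihilates every positive-degree
homogeneous element of `C`, then `ζ = 0`. -/
theorem vanishing_of_fiber_class
    {A : Type*} [CommRing A] (𝒜 : ℕ → AddSubgroup A) [GradedRing 𝒜]
    (N : ℕ)
    (hTop : ∀ i : ℕ, N < i → ∀ a ∈ 𝒜 i, a = 0)
    (hPair : ∀ m ≤ N, ∀ a ∈ 𝒜 m, a ≠ 0 → ∃ b ∈ 𝒜 (N - m), a * b ≠ 0)
    (C : Subring A)
    (hCgr : ∀ c ∈ C, ∀ i : ℕ, (DirectSum.decompose 𝒜 c i : A) ∈ C)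
    (d m : ℕ) (hdm : d < m) (hmN : m ≤ N)
    (S : Set A)
    (hShom : ∀ s ∈ S, ∃ i ≤ d, s ∈ 𝒜 i)
    (hgen : ∀ a : A, ∃ (n : ℕ) (c : Fin n → A) (s : Fin n → A),
      (∀ j, c j ∈ C) ∧ (∀ j, s j ∈ S) ∧ a = ∑ j, c j * s j)
    (ζ : A) (hζmem : ζ ∈ 𝒜 (N - m))
    (hζ : ∀ c ∈ C, ∀ i : ℕ, 0 < i → c ∈ 𝒜 i → ζ * c = 0) :
    ζ = 0 :=
  vanishing_of_fiber_class_general 𝒜 N hPair C hCgr d m hdm hmN S hShom hgen ζ hζmem hζ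
end
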